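/- The gradient of J(a) = (λ/2)∫₀¹ a(t)² dt + (1/2)∫_Ω (u(x,1) − O(x))² dΩ, where u depends on the control a through a linear ODE du/dt = a(t)·g(x) with u(x,0) = f(x), is given by ∂J/∂a(t) = λ a(t) − ∫_Ω φ(x,t) g(x) dΩ, where φ solves the adjoint equation ∂φ/∂t = 0 backward from φ(x,1) = O(x) − u(x,1). -/

import Mathlib

/-!
Along the line `s ↦ a + s δ` the state is affine in `s`:
`u_{a+sδ} − O = (u_a − O) + s (∫₀¹ δ) g`. Hence both terms of `J` have the form `∫ (F + s G)²`
(the Tikhonov term for Lebesgue measure on `(0, 1]`), a quadratic polynomial in `s` with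
derivative `2 ∫ F G` at `0`. In the misfit term `∫ (u_a − O) (∫₀¹ δ) g = −(∫ φ g) ∫₀¹ δ`,
which is how the time-constant adjoint state enters the gradient.
-/

open MeasureTheory

theorem Continuous.memLp_two_restrict_Ioc {f : ℝ → ℝ} (hf : Continuous f) (a b : ℝ) :
    MemLp f 2 (volume.restrict (Set.Ioc a b)) :=
  (memLp_two_iff_integrable_sq hf.aestronglyMeasurable).2 (hf.pow 2).integrableOn_Ioc

theorem intervalIntegral.integral_add_const_mul {f g : ℝ → ℝ} {a b : ℝ}
    (hf : IntervalIntegrable f volume a b) (hg : IntervalIntegrable g volume a b) (s : ℝ) :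
    ∫ t in a..b, (f t + s * g t) = (∫ t in a..b, f t) + s * ∫ t in a..b, g t := by
  rw [intervalIntegral.integral_add hf (hg.const_mul s), intervalIntegral.integral_const_mul]

section SquaredNorm

variable {α : Type*} [MeasurableSpace α] {μ : Measure α} {F G : α → ℝ}

theorem integral_add_mul_sq (hF : MemLp F 2 μ) (hG : MemLp G 2 μ) (s : ℝ) :
    ∫ x, (F x + s * G x) ^ 2 ∂μ =
      ∫ x, F x ^ 2 ∂μ + s * (2 * ∫ x, F x * G x ∂μ) + s ^ 2 * ∫ x, G x ^ 2 ∂μ := by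
  have hFG : Integrable (fun x => F x * G x) μ := hF.integrable_mul hG
  calc ∫ x, (F x + s * G x) ^ 2 ∂μ
      = ∫ x, F x ^ 2 + (2 * s * (F x * G x) + s ^ 2 * G x ^ 2) ∂μ :=
        integral_congr_ae (.of_forall fun x => by ring)
    _ = _ := by
      have hlin : Integrable (fun x => 2 * s * (F x * G x) + s ^ 2 * G x ^ 2) μ :=
        (hFG.const_mul _).add (hG.integrable_sq.const_mul _)
      rw [integral_add hF.integrable_sq hlin,
        integral_add (hFG.const_mul _) (hG.integrable_sq.const_mul _),
        integral_const_mul, integral_const_mul]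
      ring

theorem hasDerivAt_integral_add_mul_sq (hF : MemLp F 2 μ) (hG : MemLp G 2 μ) :
    HasDerivAt (fun s : ℝ => ∫ x, (F x + s * G x) ^ 2 ∂μ) (2 * ∫ x, F x * G x ∂μ) 0 := by
  simp_rw [integral_add_mul_sq hF hG]
  exact ((((hasDerivAt_id (0 : ℝ)).mul_const _).const_add _).add
    ((hasDerivAt_pow 2 (0 : ℝ)).mul_const (∫ x, G x ^ 2 ∂μ))).congr_deriv (by simp)

end SquaredNorm

theorem gateaux_derivative_of_control_objective_general
    {α : Type*} [MeasurableSpace α] (μ : Measure α)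
    (lam : ℝ)
    (a δ : ℝ → ℝ) (ha : Continuous a) (hδ : Continuous δ)
    (f g O : α → ℝ) (hf : MemLp f 2 μ) (hg : MemLp g 2 μ) (hO : MemLp O 2 μ) :
    let u : (ℝ → ℝ) → α → ℝ := fun b x => f x + (∫ t in (0:ℝ)..1, b t) * g x
    let J : (ℝ → ℝ) → ℝ := fun b =>
      lam / 2 * (∫ t in (0:ℝ)..1, (b t) ^ 2) + 1 / 2 * ∫ x, (u b x - O x) ^ 2 ∂μ
    let φ : α → ℝ := fun x => O x - u a x
    HasDerivAt (fun s : ℝ => J (fun t => a t + s * δ t))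
      (∫ t in (0:ℝ)..1, (lam * a t - ∫ x, φ x * g x ∂μ) * δ t) 0 := by
  intro u J φ
  set D := ∫ t in (0:ℝ)..1, δ t
  have hu (s : ℝ) (x : α) :
      u (fun t => a t + s * δ t) x - O x = (u a x - O x) + s * (D * g x) := by
    simp only [u, D, intervalIntegral.integral_add_const_mul (ha.intervalIntegrable 0 1)
      (hδ.intervalIntegrable 0 1)]
    ring
  have hmisfit : MemLp (fun x => u a x - O x) 2 μ := (hf.add (hg.const_mul _)).sub hO
  have hJ := ((hasDerivAt_integral_add_mul_sq (ha.memLp_two_restrict_Ioc 0 1)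
    (hδ.memLp_two_restrict_Ioc 0 1)).const_mul (lam / 2)).add
    ((hasDerivAt_integral_add_mul_sq hmisfit (hg.const_mul D)).const_mul (1 / 2))
  have hline : (fun s : ℝ => J (fun t => a t + s * δ t)) =
      (fun s => lam / 2 * ∫ t in Set.Ioc 0 1, (a t + s * δ t) ^ 2) +
        fun s => 1 / 2 * ∫ x, (u a x - O x + s * (D * g x)) ^ 2 ∂μ := by
    ext s
    simp only [J, Pi.add_apply, hu, intervalIntegral.integral_of_le zero_le_one]
  rw [hline]
  refine hJ.congr_deriv ?_
  set c := ∫ x, (u a x - O x) * g x ∂μ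
  have hφ : ∫ x, φ x * g x ∂μ = -c := by
    rw [← integral_neg]; congr 1 with x; simp only [φ]; ring
  have hDg : ∫ x, (u a x - O x) * (D * g x) ∂μ = D * c := by
    simp only [c, mul_left_comm _ D, integral_const_mul]
  calc lam / 2 * (2 * ∫ t in Set.Ioc 0 1, a t * δ t)
        + 1 / 2 * (2 * ∫ x, (u a x - O x) * (D * g x) ∂μ)
      = ∫ t in (0:ℝ)..1, (lam * (a t * δ t) + c * δ t) := by
        rw [hDg, intervalIntegral.integral_add_const_mul
          (Continuous.intervalIntegrable (by fun_prop) _ _) (hδ.intervalIntegrable 0 1),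
          intervalIntegral.integral_const_mul, intervalIntegral.integral_of_le zero_le_one]
        ring
    _ = ∫ t in (0:ℝ)..1, (lam * a t - ∫ x, φ x * g x ∂μ) * δ t := by
        rw [hφ]; congr 1 with t; ring

/-- for the scalar-control problem with state
`u_b(x) = f(x) + (∫₀¹ b(t) dt) g(x)` and objective
`J(b) = (λ/2)∫₀¹ b(t)² dt + (1/2)∫ (u_b(x) − O(x))² dμ`,
the Gâteaux derivative of `J` at `a` in direction `δ` is
`∫₀¹ (λ a(t) − ∫ φ(x) g(x) dμ) δ(t) dt`, where the adjoint state is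
`φ(x) = O(x) − u_a(x)` (constant in time, as the adjoint equation is `∂φ/∂t = 0`
backward from `φ|_{t=1} = O − u_a(·,1)`). -/
theorem gateaux_derivative_of_control_objective
    {α : Type*} [MeasurableSpace α] (μ : Measure α) [IsFiniteMeasure μ]
    (lam : ℝ) (hlam : 0 < lam)
    (a δ : ℝ → ℝ) (ha : Continuous a) (hδ : Continuous δ)
    (f g O : α → ℝ) (hf : MemLp f 2 μ) (hg : MemLp g 2 μ) (hO : MemLp O 2 μ) :
    let u : (ℝ → ℝ) → α → ℝ := fun b x => f x + (∫ t in (0:ℝ)..1, b t) * g x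
    let J : (ℝ → ℝ) → ℝ := fun b =>
      lam / 2 * (∫ t in (0:ℝ)..1, (b t) ^ 2) + 1 / 2 * ∫ x, (u b x - O x) ^ 2 ∂μ
    let φ : α → ℝ := fun x => O x - u a x
    HasDerivAt (fun s : ℝ => J (fun t => a t + s * δ t))
      (∫ t in (0:ℝ)..1, (lam * a t - ∫ x, φ x * g x ∂μ) * δ t) 0 :=
  gateaux_derivative_of_control_objective_general μ lam a δ ha hδ f g O hf hg hO
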